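/- arXiv:1302.1736 — 4 statements merged into one kernel-verified Lean document; each statement's English description precedes it below -/
import Mathlib

section
/- Let B be the unweighted backward shift on l^∞(ℕ) and let λ ∈ ℂ with |λ| ≤ 2. Then for every x ∈ l^∞(ℕ) the extended limit set J_{I+λB}(x) has empty interior in l^∞(ℕ); in particular, there is no nonzero x ∈ l^∞(ℕ) with J_{I+λB}(x) = l^∞(ℕ), i.e. I+λB is not locally topologically transitive. -/
open Filter Topology
open scoped ENNReal

/-- The unweighted backward shift on `l^∞(ℕ)`, the space of bounded sequences of
complex numbers with the supremum norm. -/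
noncomputable def backwardShift : lp (fun _ : ℕ => ℂ) ∞ →L[ℂ] lp (fun _ : ℕ => ℂ) ∞ :=
  LinearMap.mkContinuous
    { toFun := fun x => ⟨fun n => x (n + 1), memℓp_infty ⟨‖x‖, by
        rintro r ⟨n, rfl⟩
        exact lp.norm_apply_le_norm ENNReal.top_ne_zero x (n + 1)⟩⟩
      map_add' := fun x y => by ext n; exact congrFun rfl n
      map_smul' := fun c x => by ext n; rfl }
    1
    (fun x => by
      rw [one_mul]
      apply lp.norm_le_of_forall_le (norm_nonneg x)
      intro n
      exact lp.norm_apply_le_norm ENNReal.top_ne_zero x (n + 1))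

/-- The extended (prolongational) limit set `J_T(x)`: all `y` for which there exist a
strictly increasing sequence `(k_n)` of positive integers and a sequence `(x_n)` with
`x_n → x` and `T^{k_n} x_n → y`. -/
noncomputable def Jset {X : Type*} [SeminormedAddCommGroup X] [NormedSpace ℂ X]
    (T : X →L[ℂ] X) (x : X) : Set X :=
  {y | ∃ k : ℕ → ℕ, StrictMono k ∧ (∀ n, 0 < k n) ∧
    ∃ u : ℕ → X, Tendsto u atTop (𝓝 x) ∧ Tendsto (fun n => (T ^ (k n)) (u n)) atTop (𝓝 y)}

/-! A Banach limit `L` on `l^∞` (an ultrafilter limit of Cesàro means) is shift-invariant, so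
for `|μ| = 1` the functional `φ x = L (μ⁻ⁿ xₙ)` satisfies `φ ∘ B = μ φ`, hence
`φ ∘ (I + λB) = (1 + λμ) φ`. Choosing `μ` with `λμ = -|λ|` makes this eigenvalue `1 - |λ|`, of
modulus at most `1` when `|λ| ≤ 2`. Along the orbits defining a point of `J(x)`, `|φ|` is therefore
multiplied by powers of a number in `[0, 1]`, so `J(x)` lies in a level set of `|φ|`; such a level
set has empty interior because a nonzero functional is an open map. -/

theorem backwardShift_apply (x : lp (fun _ : ℕ => ℂ) ∞) (n : ℕ) :
    backwardShift x n = x (n + 1) := rfl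

section Eigenfunctional

variable {X : Type*} [SeminormedAddCommGroup X] [NormedSpace ℂ X]

theorem interior_setOf_norm_apply_eq_empty {φ : X →L[ℂ] ℂ} (hφ : φ ≠ 0) (c : ℝ) :
    interior {y | ‖φ y‖ = c} = ∅ := by
  have hsurj : Function.Surjective φ :=
    LinearMap.surjective_of_ne_zero (f := (φ : X →ₗ[ℂ] ℂ)) (by exact_mod_cast hφ)
  have hopen : IsOpenMap φ := LinearMap.isOpenMap_of_finiteDimensional (φ : X →ₗ[ℂ] ℂ) hsurj
  have hlevel : {y | ‖φ y‖ = c} = φ ⁻¹' Metric.sphere 0 c := by ext; simp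
  rw [hlevel, ← hopen.preimage_interior_eq_interior_preimage φ.continuous, interior_sphere',
    Set.preimage_empty]

theorem apply_pow_apply_of_comp_eq_smul {T : X →L[ℂ] X} {φ : X →L[ℂ] ℂ} {α : ℂ}
    (hφT : φ.comp T = α • φ) (k : ℕ) (y : X) : φ ((T ^ k) y) = α ^ k * φ y := by
  induction k generalizing y with
  | zero => simp
  | succ k ih =>
    rw [pow_succ, mul_apply_eq_comp, ih, ← ContinuousLinearMap.comp_apply, hφT]
    simp [pow_succ, mul_assoc]

theorem exists_Jset_subset_setOf_norm_apply_eq {T : X →L[ℂ] X} {φ : X →L[ℂ] ℂ} {α : ℂ}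
    (hφT : φ.comp T = α • φ) (hα : ‖α‖ ≤ 1) (x : X) :
    ∃ c : ℝ, Jset T x ⊆ {y | ‖φ y‖ = c} := by
  have key : ∀ y ∈ Jset T x, ∃ (k : ℕ → ℕ) (u : ℕ → X), Tendsto k atTop atTop ∧
      Tendsto (fun n => ‖φ (u n)‖) atTop (𝓝 ‖φ x‖) ∧
      Tendsto (fun n => ‖α‖ ^ k n * ‖φ (u n)‖) atTop (𝓝 ‖φ y‖) := by
    rintro y ⟨k, hk, -, u, hu, hTu⟩
    refine ⟨k, u, hk.tendsto_atTop, ((φ.continuous.tendsto x).comp hu).norm,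
      ((φ.continuous.tendsto y).comp hTu).norm.congr fun n => ?_⟩
    simp only [Function.comp_apply, apply_pow_apply_of_comp_eq_smul hφT, norm_mul, norm_pow]
  rcases hα.eq_or_lt with hα1 | hα1
  · refine ⟨‖φ x‖, fun y hy => ?_⟩
    obtain ⟨k, u, -, hu, hy⟩ := key y hy
    simp only [hα1, one_pow, one_mul] at hy
    exact tendsto_nhds_unique hy hu
  · refine ⟨0, fun y hy => ?_⟩
    obtain ⟨k, u, hk, hu, hy⟩ := key y hy
    have h0 := ((tendsto_pow_atTop_nhds_zero_of_lt_one (norm_nonneg α) hα1).comp hk).mul hu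
    rw [zero_mul] at h0
    exact tendsto_nhds_unique hy h0

theorem interior_Jset_eq_empty_of_comp_eq_smul {T : X →L[ℂ] X} {φ : X →L[ℂ] ℂ} (hφ : φ ≠ 0)
    {α : ℂ} (hφT : φ.comp T = α • φ) (hα : ‖α‖ ≤ 1) (x : X) : interior (Jset T x) = ∅ := by
  obtain ⟨c, hc⟩ := exists_Jset_subset_setOf_norm_apply_eq hφT hα x
  exact Set.subset_empty_iff.mp
    (interior_setOf_norm_apply_eq_empty hφ c ▸ interior_mono hc)

end Eigenfunctional

section UltrafilterLimit

variable {ι : Type*} (U : Ultrafilter ι)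

theorem lp.tendsto_limUnder_ultrafilter (x : lp (fun _ : ι => ℂ) ∞) :
    Tendsto x U (𝓝 (limUnder U x)) := by
  have hball : ∀ i, x i ∈ Metric.closedBall 0 ‖x‖ := fun i => by
    simpa using lp.norm_apply_le_norm ENNReal.top_ne_zero x i
  obtain ⟨z, -, hz⟩ := (isCompact_closedBall (0 : ℂ) ‖x‖).ultrafilter_le_nhds (U.map x)
    (by rw [Ultrafilter.coe_map, le_principal_iff]; exact mem_map.2 (univ_mem' hball))
  exact tendsto_nhds_limUnder ⟨z, hz⟩

noncomputable def ultrafilterLimit : lp (fun _ : ι => ℂ) ∞ →L[ℂ] ℂ :=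
  LinearMap.mkContinuous
    { toFun := fun x => limUnder U x
      map_add' := fun x y => by
        refine tendsto_nhds_unique (lp.tendsto_limUnder_ultrafilter U (x + y)) ?_
        rw [lp.coeFn_add]
        exact (lp.tendsto_limUnder_ultrafilter U x).add (lp.tendsto_limUnder_ultrafilter U y)
      map_smul' := fun c x => by
        refine tendsto_nhds_unique (lp.tendsto_limUnder_ultrafilter U (c • x)) ?_
        rw [lp.coeFn_smul]
        exact (lp.tendsto_limUnder_ultrafilter U x).const_smul c }
    1
    (fun x => by
      rw [one_mul]
      exact le_of_tendsto (lp.tendsto_limUnder_ultrafilter U x).norm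
        (Filter.Eventually.of_forall (lp.norm_apply_le_norm ENNReal.top_ne_zero x)))

variable {U}

theorem ultrafilterLimit_eq_of_tendsto {x : lp (fun _ : ι => ℂ) ∞} {c : ℂ}
    (h : Tendsto x U (𝓝 c)) : ultrafilterLimit U x = c :=
  tendsto_nhds_unique (lp.tendsto_limUnder_ultrafilter U x) h

end UltrafilterLimit

section BanachLimit

open Finset

theorem norm_sum_range_div_le (x : lp (fun _ : ℕ => ℂ) ∞) (n : ℕ) :
    ‖(∑ k ∈ range (n + 1), x k) / (n + 1)‖ ≤ ‖x‖ := by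
  have hsum : ‖∑ k ∈ range (n + 1), x k‖ ≤ (n + 1) * ‖x‖ := by
    simpa using norm_sum_le_of_le (range (n + 1))
      (fun k _ => lp.norm_apply_le_norm ENNReal.top_ne_zero x k)
  rw [norm_div, div_le_iff₀ (by norm_cast; positivity)]
  norm_cast at hsum ⊢
  linarith

noncomputable def cesaroMean : lp (fun _ : ℕ => ℂ) ∞ →L[ℂ] lp (fun _ : ℕ => ℂ) ∞ :=
  LinearMap.mkContinuous
    { toFun := fun x => ⟨fun n => (∑ k ∈ range (n + 1), x k) / (n + 1),
        memℓp_infty ⟨‖x‖, by rintro _ ⟨n, rfl⟩; exact norm_sum_range_div_le x n⟩⟩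
      map_add' := fun x y => by
        ext n
        simp only [lp.coeFn_add, Pi.add_apply, sum_add_distrib, add_div]
      map_smul' := fun c x => by
        ext n
        simp only [lp.coeFn_smul, Pi.smul_apply, smul_eq_mul, RingHom.id_apply, ← mul_sum,
          mul_div_assoc] }
    1
    (fun x => by
      rw [one_mul]
      exact lp.norm_le_of_forall_le (norm_nonneg x) (norm_sum_range_div_le x))

theorem cesaroMean_apply (x : lp (fun _ : ℕ => ℂ) ∞) (n : ℕ) :
    cesaroMean x n = (∑ k ∈ range (n + 1), x k) / (n + 1) := rfl

theorem cesaroMean_backwardShift_sub_apply (x : lp (fun _ : ℕ => ℂ) ∞) (n : ℕ) :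
    cesaroMean (backwardShift x) n - cesaroMean x n = (x (n + 1) - x 0) / (n + 1) := by
  simp only [cesaroMean_apply, backwardShift_apply, ← sub_div]
  rw [sum_range_succ' (fun k => x k), sum_range_succ (fun k => x (k + 1))]
  ring

theorem tendsto_cesaroMean_backwardShift_sub (x : lp (fun _ : ℕ => ℂ) ∞) :
    Tendsto (fun n => cesaroMean (backwardShift x) n - cesaroMean x n) atTop (𝓝 0) := by
  simp only [cesaroMean_backwardShift_sub_apply]
  refine squeeze_zero_norm (fun n => ?_)
    ((tendsto_one_div_add_atTop_nhds_zero_nat).const_mul (2 * ‖x‖) |>.trans (by rw [mul_zero]))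
  have hnum : ‖x (n + 1) - x 0‖ ≤ 2 * ‖x‖ := by
    linarith [norm_sub_le (x (n + 1)) (x 0), lp.norm_apply_le_norm ENNReal.top_ne_zero x (n + 1),
      lp.norm_apply_le_norm ENNReal.top_ne_zero x 0]
  rw [norm_div, mul_one_div]
  norm_cast
  gcongr

noncomputable def banachLimit : lp (fun _ : ℕ => ℂ) ∞ →L[ℂ] ℂ :=
  ultrafilterLimit (Ultrafilter.of atTop) ∘L cesaroMean

theorem banachLimit_backwardShift (x : lp (fun _ : ℕ => ℂ) ∞) :
    banachLimit (backwardShift x) = banachLimit x := by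
  have h : ultrafilterLimit (Ultrafilter.of atTop) (cesaroMean (backwardShift x) - cesaroMean x)
      = 0 := by
    refine ultrafilterLimit_eq_of_tendsto ?_
    rw [lp.coeFn_sub]
    exact (tendsto_cesaroMean_backwardShift_sub x).mono_left (Ultrafilter.of_le atTop)
  rwa [map_sub, sub_eq_zero] at h

theorem banachLimit_one : banachLimit 1 = 1 := by
  have h : cesaroMean 1 = 1 := by
    ext n
    simp [cesaroMean_apply, lp.infty_coeFn_one, Nat.cast_add_one_ne_zero]
  rw [banachLimit, ContinuousLinearMap.comp_apply, h]
  refine ultrafilterLimit_eq_of_tendsto ?_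
  rw [lp.infty_coeFn_one]
  exact tendsto_const_nhds

end BanachLimit

section ShiftEigenfunctional

noncomputable def circlePowers (μ : Circle) : lp (fun _ : ℕ => ℂ) ∞ :=
  ⟨fun n => ((μ ^ n : Circle) : ℂ), memℓp_infty ⟨1, by rintro _ ⟨n, rfl⟩; simp [Circle.norm_coe]⟩⟩

theorem circlePowers_apply (μ : Circle) (n : ℕ) : circlePowers μ n = (μ : ℂ) ^ n := rfl

theorem circlePowers_inv_mul_circlePowers (μ : Circle) : circlePowers μ⁻¹ * circlePowers μ = 1 := by
  ext n
  simp [lp.infty_coeFn_mul, lp.infty_coeFn_one, circlePowers_apply]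

theorem backwardShift_circlePowers_mul (μ : Circle) (x : lp (fun _ : ℕ => ℂ) ∞) :
    backwardShift (circlePowers μ * x) = (μ : ℂ) • (circlePowers μ * backwardShift x) := by
  ext n
  simp only [backwardShift_apply, lp.infty_coeFn_mul, lp.coeFn_smul, Pi.mul_apply, Pi.smul_apply,
    circlePowers_apply, smul_eq_mul, pow_succ]
  ring

noncomputable def shiftEigenfunctional (μ : Circle) : lp (fun _ : ℕ => ℂ) ∞ →L[ℂ] ℂ :=
  banachLimit ∘L ContinuousLinearMap.mul ℂ _ (circlePowers μ⁻¹)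

theorem shiftEigenfunctional_comp_backwardShift (μ : Circle) :
    (shiftEigenfunctional μ).comp backwardShift = (μ : ℂ) • shiftEigenfunctional μ := by
  ext x
  have h := congrArg banachLimit (backwardShift_circlePowers_mul μ⁻¹ x)
  rw [banachLimit_backwardShift, map_smul, Circle.coe_inv, smul_eq_mul] at h
  simp [shiftEigenfunctional, h]

theorem shiftEigenfunctional_ne_zero (μ : Circle) : shiftEigenfunctional μ ≠ 0 := by
  intro h
  have h1 := congrArg (fun φ : lp (fun _ : ℕ => ℂ) ∞ →L[ℂ] ℂ => φ (circlePowers μ)) h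
  simp [shiftEigenfunctional, circlePowers_inv_mul_circlePowers, banachLimit_one] at h1

end ShiftEigenfunctional

theorem exists_circle_mul_eq_neg_norm (z : ℂ) : ∃ μ : Circle, z * μ = -‖z‖ := by
  refine ⟨Circle.exp (Real.pi - Complex.arg z), ?_⟩
  have hexp : (Complex.arg z : ℂ) * Complex.I + (Real.pi - Complex.arg z : ℝ) * Complex.I
      = Real.pi * Complex.I := by push_cast; ring
  calc z * Circle.exp (Real.pi - Complex.arg z)
      = ‖z‖ * Complex.exp (Complex.arg z * Complex.I) *
          Complex.exp ((Real.pi - Complex.arg z : ℝ) * Complex.I) := by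
        rw [Complex.norm_mul_exp_arg_mul_I, Circle.coe_exp]
    _ = -‖z‖ := by rw [mul_assoc, ← Complex.exp_add, hexp, Complex.exp_pi_mul_I, mul_neg_one]

/-- If `|λ| ≤ 2`, then for every `x ∈ l^∞(ℕ)` the extended limit set `J_{I+λB}(x)` has
empty interior; in particular, there is no nonzero `x` with `J_{I+λB}(x) = l^∞(ℕ)`,
i.e. `I + λB` is not locally topologically transitive. -/
theorem stmt0 (lam : ℂ) (hlam : ‖lam‖ ≤ 2) :
    (∀ x : lp (fun _ : ℕ => ℂ) ∞, interior (Jset (1 + lam • backwardShift) x) = ∅) ∧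
    ¬ ∃ x : lp (fun _ : ℕ => ℂ) ∞, x ≠ 0 ∧
        Jset (1 + lam • backwardShift) x = Set.univ := by
  obtain ⟨μ, hμ⟩ := exists_circle_mul_eq_neg_norm lam
  have hcomp : (shiftEigenfunctional μ).comp (1 + lam • backwardShift)
      = ((1 - ‖lam‖ : ℝ) : ℂ) • shiftEigenfunctional μ := by
    rw [ContinuousLinearMap.comp_add, ContinuousLinearMap.comp_smul,
      shiftEigenfunctional_comp_backwardShift, smul_smul, hμ, ContinuousLinearMap.one_def,
      ContinuousLinearMap.comp_id]
    push_cast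
    module
  have hα : ‖((1 - ‖lam‖ : ℝ) : ℂ)‖ ≤ 1 := by
    rw [Complex.norm_real, Real.norm_eq_abs, abs_le]
    constructor <;> linarith [norm_nonneg lam]
  have hJ := interior_Jset_eq_empty_of_comp_eq_smul (shiftEigenfunctional_ne_zero μ) hcomp hα
  refine ⟨hJ, fun ⟨x, _, hx⟩ => ?_⟩
  simpa [hx] using hJ x
end

section
/- Let T be a bounded linear operator on a complex Banach space X and suppose there exists a vector x ∈ X such that the extended limit set J_T(x) has nonempty interior. Then for every λ ∈ ℂ with |λ| ≤ 1 the operator T − λI has dense range. -/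
/-!
If `T - λI` does not have dense range, a nonzero functional `f` vanishes on its range, so
`f ∘ T = λ f` and `f (T^{k_n} x_n) = λ^{k_n} f x_n`. Since `|λ| ≤ 1`, the powers `|λ|^{k_n}`
converge to a limit `L` (`0` or `1`), so `|f| = L |f x|` is constant on `J_T(x)`. A linear
functional of constant modulus on a nonempty open set vanishes (parallelogram law applied
at `y₀ ± w`), contradicting `f ≠ 0`.
-/

open Filter Topology

theorem ContinuousLinearMap.exists_dual_ne_zero_comp_eq_zero_of_not_denseRange
    {𝕜 E F : Type*} [RCLike 𝕜] [TopologicalSpace E] [AddCommGroup E] [Module 𝕜 E]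
    [NormedAddCommGroup F] [NormedSpace 𝕜 F] (S : E →L[𝕜] F) (h : ¬ DenseRange S) :
    ∃ f : StrongDual 𝕜 F, f ≠ 0 ∧ f ∘L S = 0 := by
  let R := LinearMap.range (S : E →ₗ[𝕜] F)
  let M := R.topologicalClosure
  have : IsClosed (M : Set F) := R.isClosed_topologicalClosure
  obtain ⟨v, hv⟩ : ∃ v, v ∉ M := by
    by_contra! hM
    exact h fun v => hM v
  obtain ⟨g, hg⟩ := SeparatingDual.exists_ne_zero (R := 𝕜)
    (show M.mkQ v ≠ 0 by simpa using hv)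
  refine ⟨g ∘L M.mkQL, fun h0 => hg (by simpa using congr($h0 v)), ?_⟩
  ext u
  have hu : S u ∈ M :=
    R.le_topologicalClosure (LinearMap.mem_range_self (S : E →ₗ[𝕜] F) u)
  simp [(Submodule.Quotient.mk_eq_zero M).2 hu]

theorem LinearMap.eq_zero_of_norm_eq_const_on_isOpen {𝕜 E F : Type*} [RCLike 𝕜]
    [AddCommGroup E] [TopologicalSpace E] [IsTopologicalAddGroup E] [Module 𝕜 E]
    [ContinuousSMul 𝕜 E] [NormedAddCommGroup F] [InnerProductSpace 𝕜 F] (g : E →ₗ[𝕜] F)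
    {U : Set E} (hU : IsOpen U) (hne : U.Nonempty) {c : ℝ} (hc : ∀ y ∈ U, ‖g y‖ = c) :
    g = 0 := by
  obtain ⟨y₀, hy₀⟩ := hne
  let V := (y₀ + ·) ⁻¹' U ∩ (y₀ - ·) ⁻¹' U
  have hV : IsOpen V :=
    (hU.preimage (continuous_const_add y₀)).inter (hU.preimage (continuous_sub_left y₀))
  have h0V : (0 : E) ∈ V := by simpa [V] using hy₀
  have hVker : V ⊆ LinearMap.ker g := by
    rintro w ⟨hplus, hminus⟩
    have hpar := parallelogram_law_with_norm 𝕜 (g y₀) (g w)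
    rw [← map_add, ← map_sub, hc _ hplus, hc _ hminus, hc _ hy₀] at hpar
    have : ‖g w‖ ^ 2 = 0 := by linarith
    simpa using this
  have hker : LinearMap.ker g = ⊤ :=
    Submodule.eq_top_of_nonempty_interior' _ ⟨0, interior_maximal hVker hV h0V⟩
  exact LinearMap.ker_eq_top.1 hker

theorem ContinuousLinearMap.apply_pow_apply_of_comp_eq_smul {X F : Type*}
    [SeminormedAddCommGroup X] [NormedSpace ℂ X] [SeminormedAddCommGroup F] [NormedSpace ℂ F]
    {T : X →L[ℂ] X} {f : X →L[ℂ] F} {lam : ℂ} (hf : f ∘L T = lam • f) (k : ℕ) (v : X) :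
    f ((T ^ k) v) = lam ^ k • f v := by
  induction k generalizing v with
  | zero => simp
  | succ k ih =>
    change f ((T ^ k) (T v)) = _
    rw [ih, ← ContinuousLinearMap.comp_apply, hf, smul_apply, smul_smul, pow_succ]

theorem norm_apply_eq_of_mem_Jset {X F : Type*} [SeminormedAddCommGroup X]
    [NormedSpace ℂ X] [SeminormedAddCommGroup F] [NormedSpace ℂ F] {T : X →L[ℂ] X}
    {f : X →L[ℂ] F} {lam : ℂ} (hf : f ∘L T = lam • f) (hlam : ‖lam‖ ≤ 1) {x y : X}
    (hy : y ∈ Jset T x) : ‖f y‖ = (⨅ k : ℕ, ‖lam‖ ^ k) * ‖f x‖ := by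
  obtain ⟨k, hk, -, u, hu, hTu⟩ := hy
  have hpow : Tendsto (fun n => ‖lam‖ ^ k n) atTop (𝓝 (⨅ k : ℕ, ‖lam‖ ^ k)) :=
    (tendsto_atTop_ciInf (pow_right_anti₀ (norm_nonneg _) hlam)
      ⟨0, by rintro _ ⟨k, rfl⟩; positivity⟩).comp hk.tendsto_atTop
  have hlim : Tendsto (fun n => ‖f ((T ^ k n) (u n))‖) atTop
      (𝓝 ((⨅ k : ℕ, ‖lam‖ ^ k) * ‖f x‖)) := by
    have := hpow.mul ((f.continuous.tendsto x).comp hu).norm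
    refine this.congr fun n => ?_
    simp only [Function.comp_apply, ContinuousLinearMap.apply_pow_apply_of_comp_eq_smul hf,
      norm_smul, norm_pow]
  exact tendsto_nhds_unique ((f.continuous.tendsto y).comp hTu).norm hlim

theorem stmt6_general {X : Type*} [NormedAddCommGroup X] [NormedSpace ℂ X]
    (T : X →L[ℂ] X) (x : X) (hx : (interior (Jset T x)).Nonempty)
    (lam : ℂ) (hlam : ‖lam‖ ≤ 1) :
    DenseRange ⇑(T - lam • (1 : X →L[ℂ] X)) := by
  by_contra hdense
  obtain ⟨f, hf0, hfS⟩ :=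
    (T - lam • (1 : X →L[ℂ] X)).exists_dual_ne_zero_comp_eq_zero_of_not_denseRange hdense
  have hfT : f ∘L T = lam • f := by
    rwa [ContinuousLinearMap.comp_sub, ContinuousLinearMap.comp_smul,
      ContinuousLinearMap.one_def, ContinuousLinearMap.comp_id, sub_eq_zero] at hfS
  have hconst : ∀ y ∈ interior (Jset T x), ‖f y‖ = (⨅ k : ℕ, ‖lam‖ ^ k) * ‖f x‖ :=
    fun y hy => norm_apply_eq_of_mem_Jset hfT hlam (interior_subset hy)
  refine hf0 (ContinuousLinearMap.coe_injective ?_)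
  exact (f : X →ₗ[ℂ] ℂ).eq_zero_of_norm_eq_const_on_isOpen isOpen_interior hx hconst

/-- If some extended limit set `J_T(x)` has nonempty interior, then for every `λ ∈ ℂ`
with `|λ| ≤ 1` the operator `T - λI` has dense range. -/
theorem stmt6 {X : Type*} [NormedAddCommGroup X] [NormedSpace ℂ X] [CompleteSpace X]
    (T : X →L[ℂ] X) (x : X) (hx : (interior (Jset T x)).Nonempty)
    (lam : ℂ) (hlam : ‖lam‖ ≤ 1) :
    DenseRange ⇑(T - lam • (1 : X →L[ℂ] X)) :=
  stmt6_general T x hx lam hlam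
end

section
/- Let T be a bounded linear operator on a complex Banach space X. If T is J-class, i.e. there exists a nonzero x ∈ X with J_T(x) = X, then the spectrum σ(T) intersects the unit circle {z ∈ ℂ : |z| = 1}. -/
open Filter Topology

/-!
Suppose `σ(T)` misses the unit circle, hence a closed annulus `r ≤ |z| ≤ R` with `r < 1 < R`,
and let `P = ∮_{|z|=r} (z - T)⁻¹ dz`, which by Cauchy's theorem is also the integral over
`|z| = R`. Multiplying the geometric-sum identity for `(z - T)⁻¹ T^n` by `z^m` and integrating
gives `P T^n = ∮_{|z|=r} z^n (z - T)⁻¹ dz`, of norm `O(r^n)`, and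
`(∮_{|z|=R} z^{-n} (z - T)⁻¹ dz) T^n = P - 2πi` for `n ≥ 1`, with a left factor bounded in `n`.
If `u_n → x` and `T^{k_n} u_n → x`, the first identity gives `P x = 0`; if `u_n → x` and
`T^{k_n} u_n → 0`, the second gives `P x = 2πi x`. So a `J`-class vector `x` is `0`.
-/

open Metric Finset

theorem ContinuousLinearMap.circleIntegral_comp_comm {E F : Type*} [NormedAddCommGroup E]
    [NormedSpace ℂ E] [CompleteSpace E] [NormedAddCommGroup F] [NormedSpace ℂ F]
    [CompleteSpace F] (L : E →L[ℂ] F) {f : ℂ → E} {c : ℂ} {R : ℝ}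
    (hf : CircleIntegrable f c R) :
    (∮ z in C(c, R), L (f z)) = L (∮ z in C(c, R), f z) := by
  simp only [circleIntegral, ← L.map_smul]
  exact L.intervalIntegral_comp_comm hf.out

theorem circleIntegral_zpow_smul {E : Type*} [NormedAddCommGroup E] [NormedSpace ℂ E]
    [CompleteSpace E] {R : ℝ} (hR : 0 < R) (m : ℤ) (v : E) :
    (∮ z in C(0, R), z ^ m • v) = (if m = -1 then 2 * Real.pi * Complex.I else 0) • v := by
  rw [circleIntegral.integral_smul_const]
  split_ifs with h
  · subst h
    simpa [zpow_neg_one] using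
      congrArg (· • v) (circleIntegral.integral_sub_inv_of_mem_ball (mem_ball_self hR (x := 0)))
  · simpa using congrArg (· • v) (circleIntegral.integral_sub_zpow_of_ne h 0 0 R)

theorem resolvent_mul_pow {R A : Type*} [CommRing R] [Ring A] [Algebra R A] (a : A) {z : R}
    (hz : z ∈ resolventSet R a) (n : ℕ) :
    resolvent a z * a ^ n = z ^ n • resolvent a z - ∑ i ∈ range n, z ^ i • a ^ (n - 1 - i) := by
  have hinv : resolvent a z * (algebraMap R A z - a) = 1 := Ring.inverse_mul_cancel _ hz
  have hgeom : resolvent a z * (algebraMap R A z ^ n - a ^ n) =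
      ∑ i ∈ range n, z ^ i • a ^ (n - 1 - i) := by
    rw [← (Algebra.commute_algebraMap_left z a).mul_geom_sum₂, ← mul_assoc, hinv, one_mul]
    simp only [← map_pow, Algebra.smul_def]
  rw [← hgeom, mul_sub, ← map_pow, ← Algebra.commutes, ← Algebra.smul_def, sub_sub_cancel]

theorem Metric.sphere_subset_closedBall_diff_ball {E : Type*} [PseudoMetricSpace E] {c : E}
    {r ρ R : ℝ} (hr : r ≤ ρ) (hR : ρ ≤ R) : sphere c ρ ⊆ closedBall c R \ ball c r :=
  fun _ hz ↦ ⟨closedBall_subset_closedBall hR (sphere_subset_closedBall hz),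
    fun hb ↦ (mem_ball.mp hb).not_ge (hr.trans (mem_sphere.mp hz).ge)⟩

section BanachAlgebra

variable {A : Type*} [NormedRing A] [NormedAlgebra ℂ A] [CompleteSpace A] (a : A) {ρ : ℝ}

theorem continuousOn_resolvent : ContinuousOn (resolvent a) (resolventSet ℂ a) :=
  fun _ hz ↦ (spectrum.hasDerivAt_resolvent_const_left hz).continuousAt.continuousWithinAt


theorem circleIntegrable_zpow_smul_resolvent (hρ : 0 < ρ) (hs : sphere 0 ρ ⊆ resolventSet ℂ a)
    (m : ℤ) : CircleIntegrable (fun z ↦ z ^ m • resolvent a z) 0 ρ :=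
  ContinuousOn.circleIntegrable hρ.le <|
    (continuousOn_id.zpow₀ m fun _ hz ↦ Or.inl (ne_of_mem_sphere hz hρ.ne')).smul
      ((continuousOn_resolvent a).mono hs)

theorem circleIntegral_zpow_smul_resolvent_mul_pow (hρ : 0 < ρ)
    (hs : sphere 0 ρ ⊆ resolventSet ℂ a) (m : ℤ) (n : ℕ) :
    (∮ z in C(0, ρ), z ^ m • resolvent a z) * a ^ n =
      (∮ z in C(0, ρ), z ^ (m + n) • resolvent a z) -
        ∑ i ∈ range n, (if m + i = -1 then 2 * Real.pi * Complex.I else 0) • a ^ (n - 1 - i) := by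
  have hpow : ∀ j : ℤ, ContinuousOn (fun z : ℂ ↦ z ^ j) (sphere 0 ρ) := fun j ↦
    continuousOn_id.zpow₀ j fun _ hz ↦ Or.inl (ne_of_mem_sphere hz hρ.ne')
  calc (∮ z in C(0, ρ), z ^ m • resolvent a z) * a ^ n
      = ∮ z in C(0, ρ), (z ^ m • resolvent a z) * a ^ n :=
        (((ContinuousLinearMap.mul ℂ A).flip (a ^ n)).circleIntegral_comp_comm
          (circleIntegrable_zpow_smul_resolvent a hρ hs m)).symm
    _ = ∮ z in C(0, ρ), (z ^ (m + n) • resolvent a z -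
          ∑ i ∈ range n, z ^ (m + i) • a ^ (n - 1 - i)) := by
        refine circleIntegral.integral_congr hρ.le fun z hz ↦ ?_
        simp only [smul_mul_assoc, resolvent_mul_pow a (hs hz), smul_sub, smul_sum, smul_smul,
          zpow_add₀ (ne_of_mem_sphere hz hρ.ne'), zpow_natCast]
    _ = _ := by
        rw [circleIntegral.integral_sub (circleIntegrable_zpow_smul_resolvent a hρ hs _),
          circleIntegral.integral_fun_sum]
        · simp only [circleIntegral_zpow_smul hρ]
        · exact fun i _ ↦ ((hpow _).smul continuousOn_const).circleIntegrable hρ.le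
        · exact (continuousOn_finsetSum _ fun i _ ↦
            (hpow _).smul continuousOn_const).circleIntegrable hρ.le

theorem circleIntegral_resolvent_mul_pow (hρ : 0 < ρ) (hs : sphere 0 ρ ⊆ resolventSet ℂ a)
    (n : ℕ) :
    (∮ z in C(0, ρ), resolvent a z) * a ^ n = ∮ z in C(0, ρ), z ^ (n : ℤ) • resolvent a z := by
  simpa using circleIntegral_zpow_smul_resolvent_mul_pow a hρ hs 0 n

theorem circleIntegral_zpow_neg_smul_resolvent_mul_pow (hρ : 0 < ρ)
    (hs : sphere 0 ρ ⊆ resolventSet ℂ a) {n : ℕ} (hn : 0 < n) :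
    (∮ z in C(0, ρ), z ^ (-n : ℤ) • resolvent a z) * a ^ n =
      (∮ z in C(0, ρ), resolvent a z) - (2 * Real.pi * Complex.I) • 1 := by
  rw [circleIntegral_zpow_smul_resolvent_mul_pow a hρ hs, neg_add_cancel,
    sum_eq_single_of_mem (n - 1) (mem_range.mpr (by omega))]
  · simp [show -(n : ℤ) + (n - 1 : ℕ) = -1 by omega]
  · intro i hi hne
    rw [if_neg (by have := mem_range.mp hi; omega), zero_smul]

theorem exists_norm_circleIntegral_zpow_smul_resolvent_le (hρ : 0 < ρ)
    (hs : sphere 0 ρ ⊆ resolventSet ℂ a) :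
    ∃ C, ∀ m : ℤ, ‖∮ z in C(0, ρ), z ^ m • resolvent a z‖ ≤ C * ρ ^ m := by
  obtain ⟨M, hM⟩ := (isCompact_sphere (0 : ℂ) ρ).exists_bound_of_continuousOn
    ((continuousOn_resolvent a).mono hs)
  refine ⟨2 * Real.pi * ρ * M, fun m ↦ ?_⟩
  calc ‖∮ z in C(0, ρ), z ^ m • resolvent a z‖ ≤ 2 * Real.pi * ρ * (ρ ^ m * M) := by
        refine circleIntegral.norm_integral_le_of_norm_le_const hρ.le fun z hz ↦ ?_
        rw [norm_smul, norm_zpow, mem_sphere_zero_iff_norm.mp hz]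
        exact mul_le_mul_of_nonneg_left (hM z hz) (by positivity)
    _ = 2 * Real.pi * ρ * M * ρ ^ m := by ring

theorem circleIntegral_resolvent_eq_of_annulus {r R : ℝ} (h0 : 0 < r) (hle : r ≤ R)
    (h : closedBall 0 R \ ball 0 r ⊆ resolventSet ℂ a) :
    (∮ z in C(0, R), resolvent a z) = ∮ z in C(0, r), resolvent a z :=
  Complex.circleIntegral_eq_of_differentiable_on_annulus_off_countable h0 hle Set.countable_empty
    ((continuousOn_resolvent a).mono h) fun _ hz ↦
      (spectrum.hasDerivAt_resolvent_const_left (h ⟨ball_subset_closedBall hz.1.1,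
        fun hb ↦ hz.1.2 (ball_subset_closedBall hb)⟩)).differentiableAt

theorem exists_annulus_subset_resolventSet (h : ∀ z ∈ spectrum ℂ a, ‖z‖ ≠ 1) :
    ∃ r R : ℝ, 0 < r ∧ r < 1 ∧ 1 < R ∧ closedBall 0 R \ ball 0 r ⊆ resolventSet ℂ a := by
  have hK : IsClosed (norm '' spectrum ℂ a) :=
    ((spectrum.isCompact a).image continuous_norm).isClosed
  have hnhds : (norm '' spectrum ℂ a)ᶜ ∩ Set.Ioi 0 ∈ 𝓝 (1 : ℝ) :=
    inter_mem (hK.isOpen_compl.mem_nhds fun ⟨z, hz, h1⟩ ↦ h z hz h1) (Ioi_mem_nhds one_pos)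
  obtain ⟨ε, hε, hball⟩ := Metric.nhds_basis_closedBall.mem_iff.mp hnhds
  refine ⟨1 - ε, 1 + ε, (hball ?_).2, by linarith, by linarith, fun z ⟨hR, hr⟩ ↦
    by_contra fun hz ↦ (hball ?_).1 ⟨z, hz, rfl⟩⟩
  · simp [abs_of_pos hε]
  · rw [mem_closedBall_zero_iff] at hR
    rw [mem_ball_zero_iff, not_lt] at hr
    rw [mem_closedBall, Real.dist_eq, abs_le]
    constructor <;> linarith

end BanachAlgebra

section JClass

variable {X : Type*} [NormedAddCommGroup X] [NormedSpace ℂ X] [CompleteSpace X] {T : X →L[ℂ] X}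
  {r : ℝ}

theorem circleIntegral_resolvent_apply_eq_zero_of_mem_Jset (hr0 : 0 < r) (hr1 : r < 1)
    (hs : sphere 0 r ⊆ resolventSet ℂ T) {x y : X} (hy : y ∈ Jset T x) :
    (∮ z in C(0, r), resolvent T z) y = 0 := by
  obtain ⟨k, hk, -, u, hu, hTu⟩ := hy
  obtain ⟨C, hC⟩ := exists_norm_circleIntegral_zpow_smul_resolvent_le T hr0 hs
  set P := ∮ z in C(0, r), resolvent T z
  have hlim : Tendsto (fun n ↦ P ((T ^ k n) (u n))) atTop (𝓝 (P y)) :=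
    (P.continuous.tendsto y).comp hTu
  have hbound : ∀ n, ‖P ((T ^ k n) (u n))‖ ≤ C * r ^ k n * ‖u n‖ := fun n ↦
    calc ‖P ((T ^ k n) (u n))‖ = ‖(P * T ^ k n) (u n)‖ := rfl
      _ ≤ ‖P * T ^ k n‖ * ‖u n‖ := (P * T ^ k n).le_opNorm _
      _ ≤ C * r ^ k n * ‖u n‖ := by
        rw [circleIntegral_resolvent_mul_pow T hr0 hs, ← zpow_natCast]
        exact mul_le_mul_of_nonneg_right (hC _) (norm_nonneg _)
  have hdecay : Tendsto (fun n ↦ C * r ^ k n * ‖u n‖) atTop (𝓝 (C * 0 * ‖x‖)) :=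
    (((tendsto_pow_atTop_nhds_zero_of_lt_one hr0.le hr1).comp hk.tendsto_atTop).const_mul
      C).mul hu.norm
  rw [mul_zero, zero_mul] at hdecay
  exact tendsto_nhds_unique hlim (squeeze_zero_norm hbound hdecay)

theorem circleIntegral_resolvent_apply_eq_of_zero_mem_Jset (hr : 1 < r)
    (hs : sphere 0 r ⊆ resolventSet ℂ T) {x : X} (h0 : 0 ∈ Jset T x) :
    (∮ z in C(0, r), resolvent T z) x = (2 * Real.pi * Complex.I) • x := by
  obtain ⟨k, -, hkpos, u, hu, hTu⟩ := h0
  have hr0 : 0 < r := one_pos.trans hr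
  obtain ⟨C, hC⟩ := exists_norm_circleIntegral_zpow_smul_resolvent_le T hr0 hs
  have hC0 : 0 ≤ C := by simpa using (norm_nonneg _).trans (hC 0)
  set P := ∮ z in C(0, r), resolvent T z
  set S : ℕ → X →L[ℂ] X := fun n ↦ ∮ z in C(0, r), z ^ (-n : ℤ) • resolvent T z
  have hid : ∀ n, S (k n) ((T ^ k n) (u n)) = P (u n) - (2 * Real.pi * Complex.I) • u n :=
    fun n ↦ by
      rw [← mul_apply_eq_comp,
        circleIntegral_zpow_neg_smul_resolvent_mul_pow T hr0 hs (hkpos n)]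
      rfl
  have hbound : ∀ n, ‖S (k n) ((T ^ k n) (u n))‖ ≤ C * ‖(T ^ k n) (u n)‖ := fun n ↦
    calc ‖S (k n) ((T ^ k n) (u n))‖ ≤ ‖S (k n)‖ * ‖(T ^ k n) (u n)‖ := (S (k n)).le_opNorm _
      _ ≤ C * ‖(T ^ k n) (u n)‖ := by
        refine mul_le_mul_of_nonneg_right ((hC _).trans ?_) (norm_nonneg _)
        exact mul_le_of_le_one_right hC0 (zpow_le_one_of_nonpos₀ hr.le (by simp))
  have hzero : Tendsto (fun n ↦ P (u n) - (2 * Real.pi * Complex.I) • u n) atTop (𝓝 0) := by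
    refine squeeze_zero_norm (fun n ↦ (hid n).symm ▸ hbound n) ?_
    simpa using hTu.norm.const_mul C
  have hlim : Tendsto (fun n ↦ P (u n) - (2 * Real.pi * Complex.I) • u n) atTop
      (𝓝 (P x - (2 * Real.pi * Complex.I) • x)) :=
    ((P.continuous.tendsto x).comp hu).sub (hu.const_smul _)
  exact sub_eq_zero.mp (tendsto_nhds_unique hlim hzero)

end JClass

/-- If `T` is a `J`-class operator (there exists a nonzero `x` with `J_T(x) = X`), then
the spectrum of `T` intersects the unit circle. -/
theorem stmt7 {X : Type*} [NormedAddCommGroup X] [NormedSpace ℂ X] [CompleteSpace X]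
    (T : X →L[ℂ] X) (hT : ∃ x : X, x ≠ 0 ∧ Jset T x = Set.univ) :
    ∃ z ∈ spectrum ℂ T, ‖z‖ = 1 := by
  by_contra! hcircle
  obtain ⟨x, hx0, hJ⟩ := hT
  obtain ⟨r, R, hr0, hr1, hR1, hann⟩ := exists_annulus_subset_resolventSet T hcircle
  have hrR : r ≤ R := (hr1.trans hR1).le
  have hinner := circleIntegral_resolvent_apply_eq_zero_of_mem_Jset hr0 hr1
    ((sphere_subset_closedBall_diff_ball le_rfl hrR).trans hann) (hJ ▸ Set.mem_univ x)
  have houter := circleIntegral_resolvent_apply_eq_of_zero_mem_Jset hR1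
    ((sphere_subset_closedBall_diff_ball hrR le_rfl).trans hann) (hJ ▸ Set.mem_univ (0 : X))
  rw [circleIntegral_resolvent_eq_of_annulus T hr0 hrR hann, hinner] at houter
  exact hx0 ((smul_eq_zero.mp houter.symm).resolve_left Complex.two_pi_I_ne_zero)
end

section
/- Let B be the unweighted backward shift on l^∞(ℕ), let n be a positive integer, let z₁, …, z_n ∈ ℂ with |z_k| < 1 for every k, and let R₁ > 0. Then for every y ∈ l^∞(ℕ) there exists x ∈ l^∞(ℕ) such that R₁·(B − z₁I)(B − z₂I)⋯(B − z_nI)x = y and ‖x‖_∞ ≤ ‖y‖_∞ / (R₁ · ∏_{k=1}^{n} (1 − |z_k|)). -/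
open Filter Topology
open scoped ENNReal

/-! Each factor `B - w` is inverted by the forward recursion `x₀ = 0`, `x_{m+1} = y_m + w x_m`;
when `|w| < 1`, induction gives `‖x‖ ≤ ‖y‖ / (1 - |w|)`. Such preimage bounds multiply along a
product of operators and are divided by `|c|` under scaling by `c`. -/

namespace ContinuousLinearMap

variable {𝕜 E F G : Type*} [NormedField 𝕜] [SeminormedAddCommGroup E] [NormedSpace 𝕜 E]
  [SeminormedAddCommGroup F] [NormedSpace 𝕜 F] [SeminormedAddCommGroup G] [NormedSpace 𝕜 G]

def HasPreimageBound (T : E →L[𝕜] F) (C : ℝ) : Prop :=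
  ∀ y, ∃ x, T x = y ∧ ‖x‖ ≤ C * ‖y‖

theorem HasPreimageBound.comp {S : F →L[𝕜] G} {T : E →L[𝕜] F} {C D : ℝ}
    (hS : S.HasPreimageBound C) (hT : T.HasPreimageBound D) (hD : 0 ≤ D) :
    (S.comp T).HasPreimageBound (D * C) := by
  intro y
  obtain ⟨v, rfl, hv⟩ := hS y
  obtain ⟨x, rfl, hx⟩ := hT v
  refine ⟨x, rfl, ?_⟩
  calc ‖x‖ ≤ D * ‖T x‖ := hx
    _ ≤ D * (C * ‖S (T x)‖) := mul_le_mul_of_nonneg_left hv hD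
    _ = D * C * ‖S (T x)‖ := (mul_assoc _ _ _).symm

theorem HasPreimageBound.smul {T : E →L[𝕜] F} {C : ℝ} (hT : T.HasPreimageBound C)
    {c : 𝕜} (hc : c ≠ 0) : (c • T).HasPreimageBound (‖c‖⁻¹ * C) := by
  intro y
  obtain ⟨x, hx, hxy⟩ := hT (c⁻¹ • y)
  refine ⟨x, by rw [smul_apply, hx, smul_inv_smul₀ hc], ?_⟩
  rw [norm_smul, norm_inv] at hxy
  exact hxy.trans_eq (by ring)

theorem hasPreimageBound_prod_ofFn {n : ℕ} {T : Fin n → E →L[𝕜] E} {C : Fin n → ℝ}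
    (hT : ∀ k, (T k).HasPreimageBound (C k)) (hC : ∀ k, 0 ≤ C k) :
    (List.ofFn T).prod.HasPreimageBound (∏ k, C k) := by
  induction n with
  | zero => exact fun y => ⟨y, rfl, by simp⟩
  | succ n ih =>
    rw [List.ofFn_succ, List.prod_cons, Fin.prod_univ_succ, mul_comm]
    exact (hT 0).comp (ih (fun k => hT k.succ) (fun k => hC k.succ))
      (Finset.prod_nonneg fun k _ => hC k.succ)

end ContinuousLinearMap

open ContinuousLinearMap

def shiftSolution (w : ℂ) (y : ℕ → ℂ) : ℕ → ℂ
  | 0 => 0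
  | m + 1 => y m + w * shiftSolution w y m

theorem norm_shiftSolution_le {w : ℂ} (hw : ‖w‖ < 1) {y : ℕ → ℂ} {M : ℝ}
    (hy : ∀ m, ‖y m‖ ≤ M) (m : ℕ) : ‖shiftSolution w y m‖ ≤ M / (1 - ‖w‖) := by
  have hw' : 0 < 1 - ‖w‖ := sub_pos.mpr hw
  have hM : 0 ≤ M := (norm_nonneg _).trans (hy 0)
  induction m with
  | zero => simpa [shiftSolution] using div_nonneg hM hw'.le
  | succ m ih =>
    calc ‖y m + w * shiftSolution w y m‖
        ≤ M + ‖w‖ * (M / (1 - ‖w‖)) := by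
          grw [norm_add_le, norm_mul, hy m, ih]
      _ = M / (1 - ‖w‖) := by field_simp; ring

theorem hasPreimageBound_backwardShift_sub {w : ℂ} (hw : ‖w‖ < 1) :
    (backwardShift - w • (1 : lp (fun _ : ℕ => ℂ) ∞ →L[ℂ] lp (fun _ : ℕ => ℂ) ∞))
      |>.HasPreimageBound (1 - ‖w‖)⁻¹ := by
  intro y
  have hbound (m : ℕ) : ‖shiftSolution w y m‖ ≤ ‖y‖ / (1 - ‖w‖) :=
    norm_shiftSolution_le hw (lp.norm_apply_le_norm ENNReal.top_ne_zero y) m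
  let x : lp (fun _ : ℕ => ℂ) ∞ :=
    ⟨shiftSolution w y, memℓp_infty ⟨_, by rintro _ ⟨m, rfl⟩; exact hbound m⟩⟩
  refine ⟨x, ?_, ?_⟩
  · ext m
    change shiftSolution w y (m + 1) - w * shiftSolution w y m = y m
    simp [shiftSolution]
  · rw [← div_eq_inv_mul]
    exact lp.norm_le_of_forall_le ((norm_nonneg _).trans (hbound 0)) hbound

theorem stmt17_general (n : ℕ) (z : Fin n → ℂ) (hz : ∀ k, ‖z k‖ < 1)
    (R : ℝ) (hR : 0 < R) (y : lp (fun _ : ℕ => ℂ) ∞) :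
    ∃ x : lp (fun _ : ℕ => ℂ) ∞,
      ((R : ℂ) • (List.ofFn fun k : Fin n =>
          backwardShift - z k • (1 : lp (fun _ : ℕ => ℂ) ∞ →L[ℂ] lp (fun _ : ℕ => ℂ) ∞)).prod)
          x = y ∧
      ‖x‖ ≤ ‖y‖ / (R * ∏ k : Fin n, (1 - ‖z k‖)) := by
  have hprod := hasPreimageBound_prod_ofFn (fun k => hasPreimageBound_backwardShift_sub (hz k))
    (fun k => (inv_pos.mpr (sub_pos.mpr (hz k))).le)
  obtain ⟨x, hx, hxy⟩ := hprod.smul (c := (R : ℂ)) (by exact_mod_cast hR.ne') y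
  refine ⟨x, hx, hxy.trans_eq ?_⟩
  rw [Complex.norm_real, Real.norm_of_nonneg hR.le, Finset.prod_inv_distrib,
    div_eq_inv_mul, mul_inv]

/-- Let `z₁, …, z_n ∈ ℂ` with `|z_k| < 1` and let `R₁ > 0`. Then every
`y ∈ l^∞(ℕ)` has a preimage `x` under `R₁ (B - z₁ I) ⋯ (B - z_n I)` with
`‖x‖ ≤ ‖y‖ / (R₁ ∏_{k=1}^n (1 - |z_k|))`. -/
theorem stmt17 (n : ℕ) (hn : 0 < n) (z : Fin n → ℂ) (hz : ∀ k, ‖z k‖ < 1)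
    (R : ℝ) (hR : 0 < R) (y : lp (fun _ : ℕ => ℂ) ∞) :
    ∃ x : lp (fun _ : ℕ => ℂ) ∞,
      ((R : ℂ) • (List.ofFn fun k : Fin n =>
          backwardShift - z k • (1 : lp (fun _ : ℕ => ℂ) ∞ →L[ℂ] lp (fun _ : ℕ => ℂ) ∞)).prod)
          x = y ∧
      ‖x‖ ≤ ‖y‖ / (R * ∏ k : Fin n, (1 - ‖z k‖)) :=
  stmt17_general n z hz R hR y
end
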